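/- arXiv:2111.06139 — 3 statements merged into one kernel-verified Lean document; each statement's English description precedes it below -/
import Mathlib

section
/- For a diagonal matrix a = diag(a_1,...,a_n) in SL_n(R) with positive entries, the supremum over 1 ≤ j ≤ n of the operator norms ||∧^j a^{-1}||_op equals the supremum over all j and all index sets 1 ≤ i_1 < ... < i_j ≤ n of 1/(a_{i_1}···a_{i_j}), and this equals α(aZ^n). -/
open scoped Matrix

/-- The Euclidean norm of the wedge product `v 0 ∧ ⋯ ∧ v (i-1)` of vectors in `ℝ^n`,
computed as the square root of the Gram determinant. -/
noncomputable def wedgeNorm {n i : ℕ} (v : Fin i → (Fin n → ℝ)) : ℝ :=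
  Real.sqrt (Matrix.det (Matrix.of fun a b => v a ⬝ᵥ v b))

/-- The lattice `g ℤ^n` as a set of vectors in `ℝ^n`. -/
def latticeSet {n : ℕ} (g : Matrix (Fin n) (Fin n) ℝ) : Set (Fin n → ℝ) :=
  {x | ∃ m : Fin n → ℤ, x = g.mulVec fun j => (m j : ℝ)}

/-- The Margulis height function `α(g ℤ^n)`: the supremum of `‖v₁ ∧ ⋯ ∧ v_i‖⁻¹` over all
nonzero wedge products (equivalently, linearly independent tuples) of lattice vectors,
`1 ≤ i ≤ n`. -/
noncomputable def alphaFn {n : ℕ} (g : Matrix (Fin n) (Fin n) ℝ) : ℝ :=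
  sSup {r : ℝ | ∃ i : ℕ, 1 ≤ i ∧ i ≤ n ∧ ∃ v : Fin i → (Fin n → ℝ),
    (∀ a, v a ∈ latticeSet g) ∧ LinearIndependent ℝ v ∧ r = (wedgeNorm v)⁻¹}

/-- The operator norm of the `j`-th exterior power `∧^j A`, expressed as the supremum of the
norms of images of unit decomposable `j`-vectors (for invertible `A` this supremum equals the
genuine operator norm of `∧^j A`, being attained at a wedge of singular vectors). -/
noncomputable def extOpNorm {n : ℕ} (j : ℕ) (A : Matrix (Fin n) (Fin n) ℝ) : ℝ :=
  sSup {r : ℝ | ∃ v : Fin j → (Fin n → ℝ), wedgeNorm v = 1 ∧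
    r = wedgeNorm (fun a => A.mulVec (v a))}

/-! By Cauchy–Binet, `‖v₁ ∧ ⋯ ∧ v_j‖²` is the sum of the squares of the `j × j` minors of the
matrix with rows `vₖ`, and `diag d` multiplies the minor on the columns `I` by `∏_{i ∈ I} d_i`.
Hence `‖∧^j diag d‖` is the largest `|∏_{i ∈ I} d_i|` over `|I| = j`, attained at `e_I`.
For the lattice `a ℤ^n`, a linearly independent family `a m₁, …, a m_j` with `mₖ ∈ ℤ^n` has a
nonzero integral minor on some columns `I`, so `‖a m₁ ∧ ⋯ ∧ a m_j‖ ≥ ∏_{i ∈ I} a_i`, with equality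
for the family `(a_i e_i)_{i ∈ I}`. -/

open Matrix Finset Equiv Function

theorem Tuple.sort_comp_perm_of_strictMono {α : Type*} [LinearOrder α] {m : ℕ} {q : Fin m → α}
    (hq : StrictMono q) (σ : Perm (Fin m)) : Tuple.sort (q ∘ σ) = σ⁻¹ := by
  refine (Tuple.eq_sort_iff.2 ⟨?_, fun i j hij hqij => ?_⟩).symm
  · simpa [comp_def] using hq.monotone
  · exact absurd (by simpa using hq.injective hqij) hij.ne

theorem Finset.sum_injective_eq_sum_strictMono_sum_perm {M α : Type*} [AddCommMonoid M]
    [Fintype α] [LinearOrder α] {m : ℕ} (F : (Fin m → α) → M) :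
    ∑ p : Fin m → α with Injective p, F p =
      ∑ q : Fin m → α with StrictMono q, ∑ σ : Perm (Fin m), F (q ∘ σ) := by
  refine (sum_nbij' (t := (univ.filter StrictMono) ×ˢ (univ : Finset (Perm (Fin m))))
    (g := fun qσ => F (qσ.1 ∘ qσ.2)) (fun p => (p ∘ Tuple.sort p, (Tuple.sort p)⁻¹))
    (fun qσ => qσ.1 ∘ qσ.2) ?_ ?_ ?_ ?_ ?_).trans (sum_product _ _ _)
  · intro p hp
    simp only [mem_filter, mem_univ, true_and, mem_product, and_true] at hp ⊢
    exact (Tuple.monotone_sort p).strictMono_of_injective (hp.comp (Tuple.sort p).injective)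
  · rintro ⟨q, σ⟩ hqσ
    simp only [mem_filter, mem_univ, true_and, mem_product, and_true] at hqσ ⊢
    exact hqσ.injective.comp σ.injective
  · intro p _
    simp [comp_assoc]
  · rintro ⟨q, σ⟩ hqσ
    simp only [mem_filter, mem_univ, true_and, mem_product, and_true] at hqσ
    rw [Tuple.sort_comp_perm_of_strictMono hqσ]
    simp [comp_assoc]
  · intro p _
    simp [comp_assoc]

theorem Matrix.det_mul_eq_sum_strictMono {R ι : Type*} [CommRing R] [Fintype ι] [LinearOrder ι]
    {m : ℕ} (A : Matrix (Fin m) ι R) (B : Matrix ι (Fin m) R) :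
    (A * B).det =
      ∑ g : Fin m → ι with StrictMono g, (A.submatrix id g).det * (B.submatrix g id).det := by
  have expand : (A * B).det = ∑ p : Fin m → ι, (∏ x, B (p x) x) * (A.submatrix id p).det := by
    have hrows : (A * B)ᵀ = of fun x => ∑ i, B i x • Aᵀ i := by
      ext x k
      simp [mul_apply, mul_comm]
    rw [← det_transpose, hrows]
    change detRowAlternating.toMultilinearMap (fun x => ∑ i, B i x • Aᵀ i) = _
    rw [MultilinearMap.map_sum]
    refine sum_congr rfl fun p _ => ?_
    rw [MultilinearMap.map_smul_univ, smul_eq_mul, ← det_transpose (A.submatrix id p)]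
    rfl
  have drop : ∑ p : Fin m → ι, (∏ x, B (p x) x) * (A.submatrix id p).det =
      ∑ p : Fin m → ι with Injective p, (∏ x, B (p x) x) * (A.submatrix id p).det := by
    refine (sum_subset (subset_univ _) fun p _ hp => ?_).symm
    obtain ⟨x, y, hxy, hne⟩ := not_injective_iff.1 (by simpa using hp)
    rw [det_zero_of_column_eq hne fun k => by simp [hxy], mul_zero]
  rw [expand, drop, sum_injective_eq_sum_strictMono_sum_perm]
  refine sum_congr rfl fun q _ => ?_
  rw [det_apply' (B.submatrix q id), mul_sum]
  refine sum_congr rfl fun σ _ => ?_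
  rw [show A.submatrix id (q ∘ σ) = (A.submatrix id q).submatrix id σ from rfl, det_permute']
  have hB : ∀ x, B ((q ∘ σ) x) x = B.submatrix q id (σ x) x := fun _ => rfl
  simp only [hB]
  ring

section

variable {n j : ℕ}

theorem det_of_dotProduct_eq_sum_sq {R : Type*} [CommRing R] (v : Fin j → Fin n → R) :
    (of fun a b => v a ⬝ᵥ v b).det =
      ∑ g : Fin j → Fin n with StrictMono g, ((of v).submatrix id g).det ^ 2 := by
  rw [show (of fun a b => v a ⬝ᵥ v b) = of v * (of v)ᵀ from rfl, det_mul_eq_sum_strictMono]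
  simp_rw [← transpose_submatrix, det_transpose, sq]

theorem linearIndependent_iff_det_of_dotProduct_ne_zero {v : Fin j → Fin n → ℝ} :
    LinearIndependent ℝ v ↔ (of fun a b => v a ⬝ᵥ v b).det ≠ 0 := by
  let e := (WithLp.linearEquiv 2 ℝ (Fin n → ℝ)).symm
  rw [← e.toLinearMap.linearIndependent_iff (LinearEquiv.ker e),
    ← det_gram_ne_zero_iff_linearIndependent (𝕜 := ℝ)]
  congr! 2
  ext a b
  exact dotProduct_comm (v b) (v a)

theorem exists_det_submatrix_ne_zero_of_linearIndependent {v : Fin j → Fin n → ℝ}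
    (hv : LinearIndependent ℝ v) :
    ∃ g : Fin j → Fin n, StrictMono g ∧ ((of v).submatrix id g).det ≠ 0 := by
  rw [linearIndependent_iff_det_of_dotProduct_ne_zero, det_of_dotProduct_eq_sum_sq] at hv
  obtain ⟨g, hg, hdet⟩ := exists_ne_zero_of_sum_ne_zero hv
  exact ⟨g, (mem_filter.1 hg).2, pow_ne_zero_iff two_ne_zero |>.1 hdet⟩

theorem wedgeNorm_eq_sqrt_sum_sq (v : Fin j → Fin n → ℝ) :
    wedgeNorm v = √(∑ g : Fin j → Fin n with StrictMono g, ((of v).submatrix id g).det ^ 2) := by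
  rw [wedgeNorm, det_of_dotProduct_eq_sum_sq]

theorem wedgeNorm_pos_iff {v : Fin j → Fin n → ℝ} :
    0 < wedgeNorm v ↔ LinearIndependent ℝ v := by
  rw [wedgeNorm, Real.sqrt_pos, linearIndependent_iff_det_of_dotProduct_ne_zero,
    det_of_dotProduct_eq_sum_sq]
  exact (sum_nonneg fun _ _ => sq_nonneg _).lt_iff_ne'

theorem wedgeNorm_diagonal_mulVec (d : Fin n → ℝ) (v : Fin j → Fin n → ℝ) :
    wedgeNorm (fun x => diagonal d *ᵥ v x) = √(∑ g : Fin j → Fin n with StrictMono g,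
      ((∏ x, d (g x)) * ((of v).submatrix id g).det) ^ 2) := by
  rw [wedgeNorm_eq_sqrt_sum_sq]
  congr 1
  refine sum_congr rfl fun g _ => ?_
  have hminor : (of fun x => diagonal d *ᵥ v x).submatrix id g =
      (of v).submatrix id g * diagonal (d ∘ g) := by
    ext x y
    simp [mulVec_diagonal, mul_comm]
  rw [hminor, det_mul, det_diagonal, mul_comm]
  rfl

theorem wedgeNorm_diagonal_mulVec_le {d : Fin n → ℝ} {C : ℝ} (hC0 : 0 ≤ C)
    (hC : ∀ g : Fin j → Fin n, StrictMono g → |∏ x, d (g x)| ≤ C) (v : Fin j → Fin n → ℝ) :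
    wedgeNorm (fun x => diagonal d *ᵥ v x) ≤ C * wedgeNorm v := by
  rw [wedgeNorm_diagonal_mulVec, wedgeNorm_eq_sqrt_sum_sq, ← Real.sqrt_sq hC0,
    ← Real.sqrt_mul (sq_nonneg C), mul_sum]
  refine Real.sqrt_le_sqrt (sum_le_sum fun g hg => ?_)
  rw [mul_pow]
  exact mul_le_mul_of_nonneg_right
    (sq_le_sq.2 ((hC g (mem_filter.1 hg).2).trans (le_abs_self C))) (sq_nonneg _)

theorem abs_prod_mul_abs_det_le_wedgeNorm_diagonal_mulVec (d : Fin n → ℝ)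
    (v : Fin j → Fin n → ℝ) {g : Fin j → Fin n} (hg : StrictMono g) :
    |∏ x, d (g x)| * |((of v).submatrix id g).det| ≤ wedgeNorm (fun x => diagonal d *ᵥ v x) := by
  rw [wedgeNorm_diagonal_mulVec, ← abs_mul, ← Real.sqrt_sq_eq_abs]
  exact Real.sqrt_le_sqrt <| single_le_sum
    (f := fun g => ((∏ x, d (g x)) * ((of v).submatrix id g).det) ^ 2)
    (fun _ _ => sq_nonneg _) (mem_filter.2 ⟨mem_univ _, hg⟩)

theorem wedgeNorm_single {g : Fin j → Fin n} (hg : Injective g) (c : Fin j → ℝ) :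
    wedgeNorm (fun x => Pi.single (g x) (c x)) = |∏ x, c x| := by
  have hgram : (of fun a b => Pi.single (g a) (c a) ⬝ᵥ Pi.single (g b) (c b)) =
      diagonal fun x => c x ^ 2 := by
    ext a b
    by_cases hab : a = b
    · simp [hab, sq]
    · simp [hab, Pi.single_apply, Ne.symm (hg.ne hab)]
  rw [wedgeNorm, hgram, det_diagonal, prod_pow, Real.sqrt_sq_eq_abs]

theorem one_le_abs_det_map_intCast {ι : Type*} [Fintype ι] [DecidableEq ι] {M : Matrix ι ι ℤ}
    (h : (M.map ((↑) : ℤ → ℝ)).det ≠ 0) : 1 ≤ |(M.map ((↑) : ℤ → ℝ)).det| := by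
  rw [← Int.cast_det] at h ⊢
  rw [← Int.cast_abs]
  exact_mod_cast Int.one_le_abs (by exact_mod_cast h)

theorem exists_prod_le_wedgeNorm_of_mem_latticeSet {a : Fin n → ℝ}
    {v : Fin j → Fin n → ℝ} (hv : ∀ x, v x ∈ latticeSet (diagonal a))
    (hli : LinearIndependent ℝ v) :
    ∃ g : Fin j → Fin n, StrictMono g ∧ ∏ x, a (g x) ≤ wedgeNorm v := by
  choose m hm using hv
  set w : Fin j → Fin n → ℝ := fun x k => (m x k : ℝ)
  have hvw : v = fun x => diagonal a *ᵥ w x := funext hm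
  have hliw : LinearIndependent ℝ w := by
    refine LinearIndependent.of_comp (diagonal a).mulVecLin ?_
    rwa [hvw] at hli
  obtain ⟨g, hg, hdet⟩ := exists_det_submatrix_ne_zero_of_linearIndependent hliw
  have hint : 1 ≤ |((of w).submatrix id g).det| :=
    one_le_abs_det_map_intCast (M := (of m).submatrix id g) hdet
  refine ⟨g, hg, ?_⟩
  calc ∏ x, a (g x) ≤ |∏ x, a (g x)| * |((of w).submatrix id g).det| :=
        (le_abs_self _).trans (le_mul_of_one_le_right (abs_nonneg _) hint)
    _ ≤ wedgeNorm v := hvw ▸ abs_prod_mul_abs_det_le_wedgeNorm_diagonal_mulVec a w hg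

theorem single_mem_latticeSet_diagonal (a : Fin n → ℝ) (i : Fin n) :
    Pi.single i (a i) ∈ latticeSet (diagonal a) := by
  refine ⟨Pi.single i 1, ?_⟩
  have hcast : (fun k => ((Pi.single i (1 : ℤ) : Fin n → ℤ) k : ℝ)) = Pi.single i 1 := by
    ext k
    simp [Pi.single_apply, apply_ite]
  rw [hcast, diagonal_mulVec_single, mul_one]

theorem extOpNorm_diagonal_le {d : Fin n → ℝ} {C : ℝ} (hC0 : 0 ≤ C)
    (hC : ∀ g : Fin j → Fin n, StrictMono g → |∏ x, d (g x)| ≤ C) :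
    extOpNorm j (diagonal d) ≤ C :=
  Real.sSup_le (by rintro _ ⟨v, hv, rfl⟩; simpa [hv] using wedgeNorm_diagonal_mulVec_le hC0 hC v)
    hC0

theorem exists_strictMono_forall_abs_prod_le (hj : j ≤ n) (d : Fin n → ℝ) :
    ∃ g₀ : Fin j → Fin n, StrictMono g₀ ∧
      ∀ g : Fin j → Fin n, StrictMono g → |∏ x, d (g x)| ≤ |∏ x, d (g₀ x)| := by
  obtain ⟨g₀, hg₀, hmax⟩ := (univ.filter (StrictMono : (Fin j → Fin n) → Prop)).exists_max_image
    (fun g => |∏ x, d (g x)|) ⟨_, mem_filter.2 ⟨mem_univ _, Fin.strictMono_castLE hj⟩⟩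
  exact ⟨g₀, (mem_filter.1 hg₀).2, fun g hg => hmax g (mem_filter.2 ⟨mem_univ _, hg⟩)⟩

theorem abs_prod_le_extOpNorm_diagonal (d : Fin n → ℝ) {g : Fin j → Fin n}
    (hg : StrictMono g) : |∏ x, d (g x)| ≤ extOpNorm j (diagonal d) := by
  obtain ⟨g₀, -, hmax⟩ :=
    exists_strictMono_forall_abs_prod_le (Fin.le_of_injective g hg.injective) d
  refine le_csSup ⟨|∏ x, d (g₀ x)|, ?_⟩
    ⟨fun x => Pi.single (g x) 1, by simpa using wedgeNorm_single hg.injective fun _ => 1, ?_⟩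
  · rintro _ ⟨v, hv, rfl⟩
    simpa [hv] using wedgeNorm_diagonal_mulVec_le (abs_nonneg _) hmax v
  · simp [wedgeNorm_single hg.injective]

end

theorem Finset.exists_nonempty_prod_iff_exists_strictMono {α β : Type*} [LinearOrder α]
    [CommMonoid β] (f : α → β) (P : β → Prop) :
    (∃ s : Finset α, s.Nonempty ∧ P (∏ i ∈ s, f i)) ↔
      ∃ j, 0 < j ∧ ∃ g : Fin j → α, StrictMono g ∧ P (∏ x, f (g x)) := by
  constructor
  · rintro ⟨s, hs, hP⟩
    refine ⟨s.card, hs.card_pos, s.orderEmbOfFin rfl, (s.orderEmbOfFin rfl).strictMono, ?_⟩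
    rwa [← prod_image fun x _ y _ h => (s.orderEmbOfFin rfl).injective h,
      image_orderEmbOfFin_univ]
  · rintro ⟨j, hj, g, hg, hP⟩
    refine ⟨univ.image g, (univ_nonempty_iff.2 ⟨⟨0, hj⟩⟩).image g, ?_⟩
    rwa [prod_image fun x _ y _ h => hg.injective h]

theorem diagonal_extOpNorm_eq_alpha_general {n : ℕ}
    (a : Fin n → ℝ) (hpos : ∀ i, 0 < a i) :
    sSup {r : ℝ | ∃ j : ℕ, 1 ≤ j ∧ j ≤ n ∧ r = extOpNorm j (Matrix.diagonal a)⁻¹} =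
      sSup {r : ℝ | ∃ s : Finset (Fin n), s.Nonempty ∧ r = (∏ i ∈ s, a i)⁻¹} ∧
    sSup {r : ℝ | ∃ s : Finset (Fin n), s.Nonempty ∧ r = (∏ i ∈ s, a i)⁻¹} =
      alphaFn (Matrix.diagonal a) := by
  have hinv : (diagonal a)⁻¹ = diagonal a⁻¹ := inv_eq_right_inv <| by
    rw [diagonal_mul_diagonal, ← diagonal_one]
    exact congrArg diagonal (funext fun i => mul_inv_cancel₀ (hpos i).ne')
  have habs : ∀ {j} (g : Fin j → Fin n), |∏ x, a⁻¹ (g x)| = (∏ x, a (g x))⁻¹ := fun g => by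
    rw [← prod_inv_distrib]
    exact abs_of_pos (prod_pos fun x _ => inv_pos.2 (hpos _))
  have hS : ∀ r, (∃ s : Finset (Fin n), s.Nonempty ∧ r = (∏ i ∈ s, a i)⁻¹) ↔
      ∃ j, 0 < j ∧ ∃ g : Fin j → Fin n, StrictMono g ∧ r = (∏ x, a (g x))⁻¹ :=
    fun r => exists_nonempty_prod_iff_exists_strictMono a (r = ·⁻¹)
  refine ⟨csSup_eq_csSup_of_forall_exists_le ?_ ?_, csSup_eq_csSup_of_forall_exists_le ?_ ?_⟩
  · rintro _ ⟨j, hj, hjn, rfl⟩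
    obtain ⟨g₀, hg₀, hmax⟩ := exists_strictMono_forall_abs_prod_le hjn a⁻¹
    refine ⟨_, (hS _).2 ⟨j, hj, g₀, hg₀, rfl⟩, ?_⟩
    rw [hinv, ← habs]
    exact extOpNorm_diagonal_le (abs_nonneg _) hmax
  · rintro _ hr
    obtain ⟨j, hj, g, hg, rfl⟩ := (hS _).1 hr
    refine ⟨_, ⟨j, hj, Fin.le_of_injective g hg.injective, rfl⟩, ?_⟩
    rw [hinv, ← habs]
    exact abs_prod_le_extOpNorm_diagonal a⁻¹ hg
  · rintro _ hr
    obtain ⟨j, hj, g, hg, rfl⟩ := (hS _).1 hr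
    have hw : wedgeNorm (fun x => Pi.single (g x) (a (g x))) = ∏ x, a (g x) := by
      rw [wedgeNorm_single hg.injective, abs_of_pos (prod_pos fun x _ => hpos _)]
    refine ⟨_, ⟨j, hj, Fin.le_of_injective g hg.injective, fun x => Pi.single (g x) (a (g x)),
      fun x => single_mem_latticeSet_diagonal a (g x), wedgeNorm_pos_iff.1 ?_, ?_⟩, le_rfl⟩
    · exact hw ▸ prod_pos fun x _ => hpos _
    · rw [hw]
  · rintro _ ⟨j, hj, -, v, hv, hli, rfl⟩
    obtain ⟨g, hg, hle⟩ := exists_prod_le_wedgeNorm_of_mem_latticeSet hv hli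
    exact ⟨_, (hS _).2 ⟨j, hj, g, hg, rfl⟩, inv_anti₀ (prod_pos fun x _ => hpos _) hle⟩

/-- for a diagonal `a = diag(a₁,…,a_n) ∈ SL_n(ℝ)` with positive entries,
`sup_{1 ≤ j ≤ n} ‖∧^j a⁻¹‖_op = sup_{∅ ≠ I ⊆ {1,…,n}} (∏_{i ∈ I} a_i)⁻¹ = α(a ℤ^n)`. -/
theorem diagonal_extOpNorm_eq_alpha {n : ℕ} (hn : 1 ≤ n)
    (a : Fin n → ℝ) (hpos : ∀ i, 0 < a i) (hdet : ∏ i, a i = 1) :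
    sSup {r : ℝ | ∃ j : ℕ, 1 ≤ j ∧ j ≤ n ∧ r = extOpNorm j (Matrix.diagonal a)⁻¹} =
      sSup {r : ℝ | ∃ s : Finset (Fin n), s.Nonempty ∧ r = (∏ i ∈ s, a i)⁻¹} ∧
    sSup {r : ℝ | ∃ s : Finset (Fin n), s.Nonempty ∧ r = (∏ i ∈ s, a i)⁻¹} =
      alphaFn (Matrix.diagonal a) :=
  diagonal_extOpNorm_eq_alpha_general a hpos
end

section
/- With notation as in the α and f_ε functions: for s > 0, g ∈ SL_n(R), and ε > 0 such that f_{g,ε}(h) < ∞ for all h ∈ H, there exist constants c_{s,ε} > 0 and C_{s,ε} > 0 such that α(hgZ^n)^s ≤ c_{s,ε}·f_{g,ε}(h)^s + C_{s,ε} for all h ∈ H. -/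
open scoped RealInnerProductSpace

/-- The Benoist–Quint function `φ_ε` on (the degree-`i` part of) `∧(ℝ^n)`, with respect to a
family of isotypic projections `τ` indexed by `ι` with `i₀` the index of the trivial isotypic
component (the `H`-fixed vectors):
`φ_ε(v) = min_{l ≠ i₀, τ_l v ≠ 0} ε^{(n−i)i} ‖τ_l v‖⁻¹` when `‖τ_{i₀} v‖ ≤ ε^{(n−i)i}`,
and `φ_ε(v) = 0` otherwise. -/
noncomputable def phiBQ {E : Type*} [NormedAddCommGroup E] [InnerProductSpace ℝ E]
    {ι : Type*} (τ : ι → E →ₗ[ℝ] E) (i₀ : ι) (n i : ℕ) (ε : ℝ) (v : E) : ℝ :=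
  if ‖τ i₀ v‖ ≤ ε ^ ((n - i) * i) then
    sInf {r : ℝ | ∃ l, l ≠ i₀ ∧ τ l v ≠ 0 ∧ r = ε ^ ((n - i) * i) / ‖τ l v‖}
  else 0

/-- for `s > 0`, `g ∈ SL_n(ℝ)`, and `ε > 0` with `f_{g,ε}` everywhere finite on
`H`, there are constants `c_{s,ε}, C_{s,ε} > 0` with
`α(hgℤ^n)^s ≤ c_{s,ε}·f_{g,ε}(h)^s + C_{s,ε}` for all `h ∈ H`.
Here the situation is axiomatized: `E` plays the role of `∧(ℝ^n)` with its isotypic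
projections `τ_l` (`i₀` indexing the `H`-fixed component `V⁰`); for `h ∈ H` the set
`Ω h ⊆ ℕ × E` records the pairs `(i, v)` with `v ∈ Ω^i(hgℤ^n)` a nonzero wedge of degree
`1 ≤ i ≤ n−1`; `α(hgℤ^n) = sup ‖v‖⁻¹` and `f_{g,ε}(h) = sup φ_ε` over `Ω h`; finiteness of
`f_{g,ε}` says that no `v ∈ Ω h ∩ V⁰` has `‖τ_{i₀} v‖ ≤ ε^{(n−i)i}`. -/
theorem alpha_le_f_eps {E H' : Type*} [NormedAddCommGroup E] [InnerProductSpace ℝ E]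
    [FiniteDimensional ℝ E] {ι : Type*} [Fintype ι]
    (n : ℕ) (hn : 3 ≤ n) (τ : ι → E →ₗ[ℝ] E) (i₀ : ι)
    (horth : ∀ l (v : E), ⟪τ l v, v - τ l v⟫ = 0)
    (hsum : ∀ v : E, ∑ l, τ l v = v)
    (hdisj : ∀ l l', l ≠ l' → ∀ v : E, τ l (τ l' v) = 0)
    (Ω : H' → Set (ℕ × E))
    (hΩ : ∀ h, ∀ p ∈ Ω h, 1 ≤ p.1 ∧ p.1 ≤ n - 1 ∧ p.2 ≠ 0)
    (s ε : ℝ) (hs : 0 < s) (hε : 0 < ε)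
    (hfin : ∀ h, ∀ p ∈ Ω h, ‖τ i₀ p.2‖ ≤ ε ^ ((n - p.1) * p.1) → p.2 ≠ τ i₀ p.2)
    (hbddα : ∀ h, BddAbove {r : ℝ | ∃ p ∈ Ω h, r = ‖p.2‖⁻¹})
    (hbddf : ∀ h, BddAbove {r : ℝ | ∃ p ∈ Ω h, r = phiBQ τ i₀ n p.1 ε p.2}) :
    ∃ c > (0 : ℝ), ∃ C > (0 : ℝ), ∀ h : H',
      (sSup {r : ℝ | ∃ p ∈ Ω h, r = ‖p.2‖⁻¹}) ^ s ≤
        c * (sSup {r : ℝ | ∃ p ∈ Ω h, r = phiBQ τ i₀ n p.1 ε p.2}) ^ s + C := by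
  classical
  set K : ℝ := (max 1 ε⁻¹) ^ (n * n) with hKdef
  have hK1 : (1:ℝ) ≤ K := one_le_pow₀ (le_max_left _ _)
  have hK0 : (0:ℝ) < K := lt_of_lt_of_le one_pos hK1
  have hKe : ∀ i : ℕ, i ≤ n - 1 → (ε ^ ((n - i) * i))⁻¹ ≤ K := by
    intro i hi
    have hm : (n - i) * i ≤ n * n :=
      Nat.mul_le_mul (Nat.sub_le _ _) (le_trans hi (Nat.sub_le _ _))
    calc (ε ^ ((n - i) * i))⁻¹ = (ε⁻¹) ^ ((n - i) * i) := by rw [inv_pow]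
      _ ≤ (max 1 ε⁻¹) ^ ((n - i) * i) :=
          pow_le_pow_left₀ (by positivity) (le_max_right _ _) _
      _ ≤ K := pow_le_pow_right₀ (le_max_left _ _) hm
  have hφ0 : ∀ (i : ℕ) (v : E), 0 ≤ phiBQ τ i₀ n i ε v := by
    intro i v
    unfold phiBQ
    split
    · apply Real.sInf_nonneg
      rintro r ⟨l, -, hl, rfl⟩
      positivity
    · exact le_refl 0
  have hproj : ∀ l (v : E), ‖τ l v‖ ≤ ‖v‖ := by
    intro l v
    have hv : τ l v + (v - τ l v) = v := by abel
    have h1 := norm_add_sq_real (τ l v) (v - τ l v)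
    rw [horth l v, hv] at h1
    nlinarith [norm_nonneg (τ l v), norm_nonneg v, sq_nonneg ‖v - τ l v‖]
  refine ⟨(2 * K) ^ s, Real.rpow_pos_of_pos (by positivity) s,
    (2 * K) ^ s, Real.rpow_pos_of_pos (by positivity) s, ?_⟩
  intro h
  set A := {r : ℝ | ∃ p ∈ Ω h, r = ‖p.2‖⁻¹} with hA
  set B := {r : ℝ | ∃ p ∈ Ω h, r = phiBQ τ i₀ n p.1 ε p.2} with hB
  have hB0 : 0 ≤ sSup B :=
    Real.sSup_nonneg (by rintro r ⟨p, hp, rfl⟩; exact hφ0 _ _)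
  have hA0 : 0 ≤ sSup A :=
    Real.sSup_nonneg (by rintro r ⟨p, hp, rfl⟩; positivity)
  have hAle : sSup A ≤ K * sSup B + K := by
    apply Real.sSup_le
    · rintro r ⟨p, hp, rfl⟩
      obtain ⟨hi1, hi2, hv0⟩ := hΩ h p hp
      have hφB : phiBQ τ i₀ n p.1 ε p.2 ≤ sSup B :=
        le_csSup (hbddf h) ⟨p, hp, rfl⟩
      have hep : 0 < ε ^ ((n - p.1) * p.1) := pow_pos hε _
      have hvpos : 0 < ‖p.2‖ := norm_pos_iff.mpr hv0
      by_cases hc : ‖τ i₀ p.2‖ ≤ ε ^ ((n - p.1) * p.1)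
      · have hne : ∃ l, l ≠ i₀ ∧ τ l p.2 ≠ 0 := by
          by_contra hcon
          push_neg at hcon
          have heq : p.2 = τ i₀ p.2 := by
            conv_lhs => rw [← hsum p.2]
            rw [Finset.sum_eq_single i₀]
            · intro l _ hl; exact hcon l hl
            · intro hl; exact absurd (Finset.mem_univ i₀) hl
          exact hfin h p hp hc heq
        have hφge : ε ^ ((n - p.1) * p.1) * ‖p.2‖⁻¹ ≤ phiBQ τ i₀ n p.1 ε p.2 := by
          unfold phiBQ
          rw [if_pos hc]
          apply le_csInf
          · obtain ⟨l, hl, hl0⟩ := hne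
            exact ⟨_, l, hl, hl0, rfl⟩
          · rintro r ⟨l, hl, hl0, rfl⟩
            rw [← div_eq_mul_inv]
            have h1 : 0 < ‖τ l p.2‖ := norm_pos_iff.mpr hl0
            gcongr
            exact hproj l p.2
        have h3 : ‖p.2‖⁻¹ ≤ (ε ^ ((n - p.1) * p.1))⁻¹ * phiBQ τ i₀ n p.1 ε p.2 := by
          rw [inv_mul_eq_div, le_div_iff₀ hep, mul_comm]
          exact hφge
        have h4 : ‖p.2‖⁻¹ ≤ K * phiBQ τ i₀ n p.1 ε p.2 :=
          h3.trans (mul_le_mul_of_nonneg_right (hKe p.1 hi2) (hφ0 _ _))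
        have h5 : K * phiBQ τ i₀ n p.1 ε p.2 ≤ K * sSup B :=
          mul_le_mul_of_nonneg_left hφB hK0.le
        linarith
      · push_neg at hc
        have hle : ε ^ ((n - p.1) * p.1) ≤ ‖p.2‖ := (hc.le.trans (hproj i₀ p.2))
        have h1 : ‖p.2‖⁻¹ ≤ (ε ^ ((n - p.1) * p.1))⁻¹ := by
          apply inv_anti₀ hep hle
        have h2 : ‖p.2‖⁻¹ ≤ K := h1.trans (hKe p.1 hi2)
        have h5 : 0 ≤ K * sSup B := mul_nonneg hK0.le hB0
        linarith
    · nlinarith [mul_nonneg hK0.le hB0, hK0.le]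
  set X := sSup B with hX
  have hmax : K * X + K ≤ 2 * K * max X 1 := by
    have h1 := mul_le_mul_of_nonneg_left (le_max_left X 1) hK0.le
    have h2 := mul_le_mul_of_nonneg_left (le_max_right X 1) hK0.le
    nlinarith
  have hM0 : (0:ℝ) ≤ max X 1 := le_trans zero_le_one (le_max_right _ _)
  have h2 : (sSup A) ^ s ≤ (2 * K * max X 1) ^ s :=
    Real.rpow_le_rpow hA0 (hAle.trans hmax) hs.le
  have h3 : (2 * K * max X 1) ^ s = (2 * K) ^ s * (max X 1) ^ s :=
    Real.mul_rpow (by positivity) hM0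
  have h4 : (max X 1) ^ s ≤ X ^ s + 1 := by
    rcases le_total X 1 with hx | hx
    · rw [max_eq_right hx, Real.one_rpow]
      nlinarith [Real.rpow_nonneg hB0 s]
    · rw [max_eq_left hx]
      linarith
  calc (sSup A) ^ s ≤ (2 * K) ^ s * (max X 1) ^ s := by rw [← h3]; exact h2
    _ ≤ (2 * K) ^ s * (X ^ s + 1) :=
        mul_le_mul_of_nonneg_left h4 (Real.rpow_nonneg (by positivity) s)
    _ = (2 * K) ^ s * X ^ s + (2 * K) ^ s := by ring
end

section
/- With notation as above, let Φ: u⁺ → u⁻ be the linear map sending E_{in} to E_{ni} for 1 ≤ i ≤ p and E_{in} to −E_{ni} for p+1 ≤ i ≤ n−1, and for ξ ∈ R let u^ξ = (Id + ξΦ)(u⁺). Then Φ is an isomorphism of h-modules, i.e., Φ([X, Y]) = [X, Φ(Y)] for all X ∈ h and Y ∈ u⁺. -/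
open scoped Matrix

/-- The degenerate diagonal matrix `diag(1,…,1,−1,…,−1,0)` (`p` ones, then `−1`s, then `0` in
the last slot), representing the standard form of signature `(p, q−1)` on the first `n−1`
coordinates of `ℝ^n`. -/
noncomputable def Jmat (n p : ℕ) : Matrix (Fin n) (Fin n) ℝ :=
  Matrix.diagonal fun i => if (i : ℕ) = n - 1 then 0 else if (i : ℕ) < p then 1 else -1

/-- The subalgebra `h` of `sl_n(ℝ)`: matrices `[[A,0],[0,0]]` with `A ∈ so(p, q−1)`. -/
noncomputable def hSet (n p : ℕ) : Set (Matrix (Fin n) (Fin n) ℝ) :=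
  {X | Xᵀ * Jmat n p + Jmat n p * X = 0 ∧
    ∀ i j : Fin n, ((i : ℕ) = n - 1 ∨ (j : ℕ) = n - 1) → X i j = 0}

/-- `u⁺ = span{E_{in} : 1 ≤ i ≤ n−1}`: matrices supported on the last column, off the
diagonal. -/
def uPlus (n : ℕ) : Set (Matrix (Fin n) (Fin n) ℝ) :=
  {X | ∀ i j : Fin n, ¬((j : ℕ) = n - 1 ∧ (i : ℕ) ≠ n - 1) → X i j = 0}

/-- `u⁻ = span{E_{ni} : 1 ≤ i ≤ n−1}`: matrices supported on the last row, off the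
diagonal. -/
def uMinus (n : ℕ) : Set (Matrix (Fin n) (Fin n) ℝ) :=
  {X | ∀ i j : Fin n, ¬((i : ℕ) = n - 1 ∧ (j : ℕ) ≠ n - 1) → X i j = 0}

/-- The generator `E₁₁ + ⋯ + E_{n−1,n−1} − (n−1)E_{nn}` of the one-dimensional subspace `t`. -/
noncomputable def tGen (n : ℕ) : Matrix (Fin n) (Fin n) ℝ :=
  Matrix.diagonal fun i => if (i : ℕ) = n - 1 then -((n : ℝ) - 1) else 1

/-- The line `t = ℝ·(E₁₁ + ⋯ + E_{n−1,n−1} − (n−1)E_{nn})`. -/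
noncomputable def tSet (n : ℕ) : Set (Matrix (Fin n) (Fin n) ℝ) :=
  {X | ∃ c : ℝ, X = c • tGen n}

/-- The map `Φ : u⁺ → u⁻` sending `E_{in} ↦ E_{ni}` for `i ≤ p` and `E_{in} ↦ −E_{ni}` for
`i > p` (indices `1 ≤ i ≤ n−1`). -/
noncomputable def phiMap (n p : ℕ) (X : Matrix (Fin n) (Fin n) ℝ) :
    Matrix (Fin n) (Fin n) ℝ :=
  Matrix.of fun i j =>
    if (i : ℕ) = n - 1 then
      if (j : ℕ) = n - 1 then 0 else (if (j : ℕ) < p then 1 else -1) * X j i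
    else 0

/-- The subspace `u^ξ = (Id + ξΦ)(u⁺)`. -/
noncomputable def uXi (n p : ℕ) (ξ : ℝ) : Set (Matrix (Fin n) (Fin n) ℝ) :=
  {Z | ∃ Y ∈ uPlus n, Z = Y + ξ • phiMap n p Y}

/-- The sum `h ⊕ u ⊕ t` as a set of matrices. -/
noncomputable def sumSet (n p : ℕ) (u : Set (Matrix (Fin n) (Fin n) ℝ)) :
    Set (Matrix (Fin n) (Fin n) ℝ) :=
  {X | ∃ A ∈ hSet n p, ∃ B ∈ u, ∃ C ∈ tSet n, X = A + B + C}

/-! `Φ` is the map `Y ↦ E_{nn} Yᵀ J`, where `J = Jmat n p`. In this form linearity is clear,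
the inverse on `u⁻` is `Z ↦ J Zᵀ` because `J² = 1 - E_{nn}`, and equivariance is a formal
consequence of `Xᵀ J = -J X` together with the vanishing of the last column of `X ∈ h`. -/

open Matrix

/-- The elementary matrix `E_{nn}`. -/
noncomputable def lastProj (n : ℕ) : Matrix (Fin n) (Fin n) ℝ :=
  diagonal fun i => if (i : ℕ) = n - 1 then 1 else 0

section lastProj

variable {n : ℕ} {M : Matrix (Fin n) (Fin n) ℝ}

theorem lastProj_transpose : (lastProj n)ᵀ = lastProj n :=
  diagonal_transpose _

theorem mul_lastProj_eq_zero (h : ∀ i j : Fin n, (j : ℕ) = n - 1 → M i j = 0) :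
    M * lastProj n = 0 := by
  ext i j
  by_cases hj : (j : ℕ) = n - 1 <;> simp [lastProj, mul_diagonal, hj, h i j]

theorem mul_lastProj_eq_self (h : ∀ i j : Fin n, (j : ℕ) ≠ n - 1 → M i j = 0) :
    M * lastProj n = M := by
  ext i j
  by_cases hj : (j : ℕ) = n - 1 <;> simp [lastProj, mul_diagonal, hj, h i j]

theorem lastProj_mul_eq_zero (h : ∀ i j : Fin n, (i : ℕ) = n - 1 → M i j = 0) :
    lastProj n * M = 0 := by
  ext i j
  by_cases hi : (i : ℕ) = n - 1 <;> simp [lastProj, diagonal_mul, hi, h i j]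

theorem lastProj_mul_eq_self (h : ∀ i j : Fin n, (i : ℕ) ≠ n - 1 → M i j = 0) :
    lastProj n * M = M := by
  ext i j
  by_cases hi : (i : ℕ) = n - 1 <;> simp [lastProj, diagonal_mul, hi, h i j]

end lastProj

section phiMap

variable {n p : ℕ}

theorem Jmat_transpose : (Jmat n p)ᵀ = Jmat n p :=
  diagonal_transpose _

theorem Jmat_mul_self : Jmat n p * Jmat n p = 1 - lastProj n := by
  rw [Jmat, lastProj, diagonal_mul_diagonal, ← diagonal_one, diagonal_sub]
  congr 1
  funext i
  split_ifs <;> norm_num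

theorem phiMap_eq_lastProj_mul_transpose_mul (Y : Matrix (Fin n) (Fin n) ℝ) :
    phiMap n p Y = lastProj n * Yᵀ * Jmat n p := by
  ext i j
  simp only [phiMap, lastProj, Jmat, of_apply, diagonal_mul, mul_diagonal, transpose_apply]
  split_ifs <;> ring

theorem phiMap_mem_uMinus (Y : Matrix (Fin n) (Fin n) ℝ) : phiMap n p Y ∈ uMinus n := by
  intro i j h
  simp only [phiMap, of_apply]
  split_ifs <;> tauto

theorem phiMap_add_smul (Y₁ Y₂ : Matrix (Fin n) (Fin n) ℝ) (c : ℝ) :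
    phiMap n p (Y₁ + c • Y₂) = phiMap n p Y₁ + c • phiMap n p Y₂ := by
  simp only [phiMap_eq_lastProj_mul_transpose_mul, transpose_add, transpose_smul, Matrix.mul_add,
    Matrix.add_mul, Matrix.mul_smul, Matrix.smul_mul]

noncomputable def phiInv (n p : ℕ) (Z : Matrix (Fin n) (Fin n) ℝ) : Matrix (Fin n) (Fin n) ℝ :=
  Jmat n p * Zᵀ

theorem phiInv_mem_uPlus {Z : Matrix (Fin n) (Fin n) ℝ} (hZ : Z ∈ uMinus n) :
    phiInv n p Z ∈ uPlus n := by
  intro i j h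
  by_cases hi : (i : ℕ) = n - 1
  · simp [phiInv, Jmat, diagonal_mul, hi]
  · simp [phiInv, Jmat, diagonal_mul, hZ j i (by tauto)]

theorem phiMap_phiInv {Z : Matrix (Fin n) (Fin n) ℝ} (hZ : Z ∈ uMinus n) :
    phiMap n p (phiInv n p Z) = Z := by
  have hrows : lastProj n * Z = Z := lastProj_mul_eq_self fun i j hi => hZ i j (by tauto)
  have hcol : Z * lastProj n = 0 := mul_lastProj_eq_zero fun i j hj => hZ i j (by tauto)
  rw [phiMap_eq_lastProj_mul_transpose_mul, phiInv, transpose_mul, transpose_transpose,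
    Jmat_transpose, Matrix.mul_assoc, Matrix.mul_assoc, Jmat_mul_self, ← Matrix.mul_assoc,
    hrows, Matrix.mul_sub, hcol, Matrix.mul_one, sub_zero]

theorem phiInv_phiMap {Y : Matrix (Fin n) (Fin n) ℝ} (hY : Y ∈ uPlus n) :
    phiInv n p (phiMap n p Y) = Y := by
  have hrow : lastProj n * Y = 0 := lastProj_mul_eq_zero fun i j hi => hY i j (by tauto)
  have hcols : Y * lastProj n = Y := mul_lastProj_eq_self fun i j hj => hY i j (by tauto)
  rw [phiMap_eq_lastProj_mul_transpose_mul, phiInv, transpose_mul, transpose_mul,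
    transpose_transpose, Jmat_transpose, lastProj_transpose, ← Matrix.mul_assoc,
    ← Matrix.mul_assoc, Jmat_mul_self, Matrix.sub_mul, Matrix.one_mul, hrow, sub_zero, hcols]

theorem phiMap_lie {X : Matrix (Fin n) (Fin n) ℝ}
    (hskew : Xᵀ * Jmat n p + Jmat n p * X = 0)
    (hcol : ∀ i j : Fin n, (j : ℕ) = n - 1 → X i j = 0) (Y : Matrix (Fin n) (Fin n) ℝ) :
    phiMap n p ⁅X, Y⁆ = ⁅X, phiMap n p Y⁆ := by
  have hXJ : Xᵀ * Jmat n p = -(Jmat n p * X) := eq_neg_of_add_eq_zero_left hskew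
  have hXE : X * lastProj n = 0 := mul_lastProj_eq_zero hcol
  have hEX : lastProj n * Xᵀ = 0 := lastProj_mul_eq_zero fun i j hi => hcol j i hi
  simp only [Ring.lie_def, phiMap_eq_lastProj_mul_transpose_mul, transpose_sub, transpose_mul]
  rw [Matrix.mul_sub, Matrix.sub_mul, ← Matrix.mul_assoc (lastProj n) Xᵀ, hEX,
    ← Matrix.mul_assoc X, ← Matrix.mul_assoc X, hXE]
  simp only [Matrix.zero_mul, sub_zero, zero_sub, Matrix.mul_assoc, hXJ, Matrix.mul_neg]

end phiMap

theorem phi_h_module_isomorphism_general (n p : ℕ) :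
    (∀ Y ∈ uPlus n, phiMap n p Y ∈ uMinus n) ∧
    (∀ Z ∈ uMinus n, ∃ Y ∈ uPlus n, phiMap n p Y = Z) ∧
    (∀ Y₁ ∈ uPlus n, ∀ Y₂ ∈ uPlus n, phiMap n p Y₁ = phiMap n p Y₂ → Y₁ = Y₂) ∧
    (∀ (Y₁ Y₂ : Matrix (Fin n) (Fin n) ℝ) (c : ℝ),
      phiMap n p (Y₁ + c • Y₂) = phiMap n p Y₁ + c • phiMap n p Y₂) ∧
    (∀ X ∈ hSet n p, ∀ Y ∈ uPlus n, phiMap n p ⁅X, Y⁆ = ⁅X, phiMap n p Y⁆) := by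
  refine ⟨fun Y _ => phiMap_mem_uMinus Y,
    fun Z hZ => ⟨phiInv n p Z, phiInv_mem_uPlus hZ, phiMap_phiInv hZ⟩,
    fun Y₁ hY₁ Y₂ hY₂ h => ?_, phiMap_add_smul,
    fun X hX Y _ => phiMap_lie hX.1 (fun i j hj => hX.2 i j (Or.inr hj)) Y⟩
  rw [← phiInv_phiMap hY₁, h, phiInv_phiMap hY₂]

/-- `Φ : u⁺ → u⁻` is an isomorphism of `h`-modules: it maps `u⁺` bijectively
onto `u⁻` and intertwines the adjoint action, `Φ([X,Y]) = [X, Φ(Y)]` for `X ∈ h`,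
`Y ∈ u⁺`. -/
theorem phi_h_module_isomorphism (n p q : ℕ) (hp : 1 ≤ p) (hq : 2 ≤ q)
    (hn : p + q = n) :
    (∀ Y ∈ uPlus n, phiMap n p Y ∈ uMinus n) ∧
    (∀ Z ∈ uMinus n, ∃ Y ∈ uPlus n, phiMap n p Y = Z) ∧
    (∀ Y₁ ∈ uPlus n, ∀ Y₂ ∈ uPlus n, phiMap n p Y₁ = phiMap n p Y₂ → Y₁ = Y₂) ∧
    (∀ (Y₁ Y₂ : Matrix (Fin n) (Fin n) ℝ) (c : ℝ),
      phiMap n p (Y₁ + c • Y₂) = phiMap n p Y₁ + c • phiMap n p Y₂) ∧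
    (∀ X ∈ hSet n p, ∀ Y ∈ uPlus n, phiMap n p ⁅X, Y⁆ = ⁅X, phiMap n p Y⁆) :=
  phi_h_module_isomorphism_general n p
end
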